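/- For all α, ψ, ψ₁, ψ₂ > 0, the log-t density p_t(λ) = c·λ^{−1}·(1 + (log λ)²/(αψ²))^{−(α+1)/2} and the log-Laplace density p_LL(λ|ψ₁,ψ₂) satisfy lim_{λ→0⁺} p_t(λ)/p_LL(λ) = ∞ and lim_{λ→∞} p_t(λ)/p_LL(λ) = ∞. -/

import Mathlib

/-!
Substituting `λ = exp z`, the log-Laplace density becomes `exp ((-1 ± 1/ψᵢ) z) / (2ψᵢ)` on either
side of `z = 0`, while the log-t density becomes `c · exp (-z) · (1 + z²/(αψ²))^(-(α+1)/2)`.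
The ratio is therefore `2ψᵢc · exp (|z|/ψᵢ)` times a factor decaying only polynomially in `|z|`,
and the exponential wins.
-/

open Real Filter

noncomputable def studentTConst (α ψ : ℝ) : ℝ :=
  Gamma ((α + 1) / 2) / (Gamma (α / 2) * sqrt (π * α) * ψ)

noncomputable def logTDensity (α ψ l : ℝ) : ℝ :=
  studentTConst α ψ * l⁻¹ * (1 + log l ^ 2 / (α * ψ ^ 2)) ^ (-(α + 1) / 2)

noncomputable def logLaplaceDensity (ψ₁ ψ₂ l : ℝ) : ℝ :=
  if l ≤ 1 then 1 / (2 * ψ₁) * l ^ (-1 + 1 / ψ₁) else 1 / (2 * ψ₂) * l ^ (-1 - 1 / ψ₂)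

lemma studentTConst_pos {α ψ : ℝ} (hα : 0 < α) (hψ : 0 < ψ) : 0 < studentTConst α ψ := by
  unfold studentTConst
  have := Gamma_pos_of_pos (by linarith : 0 < (α + 1) / 2)
  have := Gamma_pos_of_pos (by linarith : 0 < α / 2)
  positivity

lemma tendsto_exp_mul_mul_one_add_sq_div_rpow_neg_atTop {a b p : ℝ} (ha : 0 < a) (hb : 0 < b)
    (hp : 0 ≤ p) : Tendsto (fun t => exp (a * t) * (1 + t ^ 2 / b) ^ (-p)) atTop atTop := by
  have hK : 0 < (1 + 1 / b) ^ (-p) := by positivity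
  refine tendsto_atTop_mono' _ ?_
    ((tendsto_exp_mul_div_rpow_atTop (2 * p) a ha).const_mul_atTop hK)
  filter_upwards [eventually_ge_atTop 1] with t ht
  have ht0 : 0 < t := one_pos.trans_le ht
  have hquad : 1 + t ^ 2 / b ≤ (1 + 1 / b) * t ^ 2 := by
    have : 1 ≤ t ^ 2 := one_le_pow₀ ht
    rw [add_mul, one_mul, one_div_mul_eq_div]
    linarith
  calc (1 + 1 / b) ^ (-p) * (exp (a * t) / t ^ (2 * p))
      = exp (a * t) * ((1 + 1 / b) * t ^ 2) ^ (-p) := by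
        rw [mul_rpow (by positivity) (by positivity), ← rpow_natCast, ← rpow_mul ht0.le,
          Nat.cast_ofNat, mul_neg, rpow_neg ht0.le]
        ring
    _ ≤ exp (a * t) * (1 + t ^ 2 / b) ^ (-p) := by
        gcongr ?_ * ?_
        exact rpow_le_rpow_of_nonpos (by positivity) hquad (neg_nonpos.mpr hp)

lemma logTDensity_exp (α ψ z : ℝ) :
    logTDensity α ψ (exp z) =
      studentTConst α ψ * exp (-z) * (1 + z ^ 2 / (α * ψ ^ 2)) ^ (-(α + 1) / 2) := by
  rw [logTDensity, log_exp, exp_neg]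

lemma logTDensity_div_logLaplaceDensity_exp_of_nonpos (α ψ ψ₂ : ℝ) {ψ₁ z : ℝ} (h₁ : ψ₁ ≠ 0)
    (hz : z ≤ 0) :
    logTDensity α ψ (exp z) / logLaplaceDensity ψ₁ ψ₂ (exp z) =
      2 * ψ₁ * studentTConst α ψ *
        (exp (1 / ψ₁ * -z) * (1 + (-z) ^ 2 / (α * ψ ^ 2)) ^ (-((α + 1) / 2))) := by
  have hsplit : exp (-z) = exp (1 / ψ₁ * -z) * exp ((-1 + 1 / ψ₁) * z) := by
    rw [← exp_add]; ring_nf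
  rw [logTDensity_exp, logLaplaceDensity, if_pos (exp_le_one_iff.mpr hz), ← exp_mul, mul_comm z,
    hsplit, neg_sq, neg_div]
  field_simp

lemma logTDensity_div_logLaplaceDensity_exp_of_pos (α ψ ψ₁ : ℝ) {ψ₂ z : ℝ} (h₂ : ψ₂ ≠ 0)
    (hz : 0 < z) :
    logTDensity α ψ (exp z) / logLaplaceDensity ψ₁ ψ₂ (exp z) =
      2 * ψ₂ * studentTConst α ψ *
        (exp (1 / ψ₂ * z) * (1 + z ^ 2 / (α * ψ ^ 2)) ^ (-((α + 1) / 2))) := by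
  have hsplit : exp (-z) = exp (1 / ψ₂ * z) * exp ((-1 - 1 / ψ₂) * z) := by
    rw [← exp_add]; ring_nf
  rw [logTDensity_exp, logLaplaceDensity, if_neg (not_le.mpr (one_lt_exp_iff.mpr hz)),
    ← exp_mul, mul_comm z, hsplit, neg_div]
  field_simp

theorem log_t_dominates_log_laplace (α ψ ψ₁ ψ₂ : ℝ)
    (hα : 0 < α) (hψ : 0 < ψ) (h₁ : 0 < ψ₁) (h₂ : 0 < ψ₂) :
    Tendsto
      (fun l : ℝ =>
        (Real.Gamma ((α + 1) / 2) / (Real.Gamma (α / 2) * Real.sqrt (π * α) * ψ) *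
            l⁻¹ * (1 + (Real.log l) ^ 2 / (α * ψ ^ 2)) ^ (-(α + 1) / 2)) /
          (if l ≤ 1 then (1 / (2 * ψ₁)) * l ^ (-1 + 1 / ψ₁)
           else (1 / (2 * ψ₂)) * l ^ (-1 - 1 / ψ₂)))
      (nhdsWithin 0 (Set.Ioi 0)) atTop ∧
    Tendsto
      (fun l : ℝ =>
        (Real.Gamma ((α + 1) / 2) / (Real.Gamma (α / 2) * Real.sqrt (π * α) * ψ) *
            l⁻¹ * (1 + (Real.log l) ^ 2 / (α * ψ ^ 2)) ^ (-(α + 1) / 2)) /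
          (if l ≤ 1 then (1 / (2 * ψ₁)) * l ^ (-1 + 1 / ψ₁)
           else (1 / (2 * ψ₂)) * l ^ (-1 - 1 / ψ₂)))
      atTop atTop := by
  change Tendsto (fun l => logTDensity α ψ l / logLaplaceDensity ψ₁ ψ₂ l) _ _ ∧
    Tendsto (fun l => logTDensity α ψ l / logLaplaceDensity ψ₁ ψ₂ l) _ _
  have hc := studentTConst_pos hα hψ
  have hp : 0 ≤ (α + 1) / 2 := by positivity
  constructor
  · rw [← tendsto_comp_exp_atBot]
    refine (((tendsto_exp_mul_mul_one_add_sq_div_rpow_neg_atTop (one_div_pos.mpr h₁)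
      (by positivity : 0 < α * ψ ^ 2) hp).comp tendsto_neg_atBot_atTop).const_mul_atTop
      (by positivity : 0 < 2 * ψ₁ * studentTConst α ψ)).congr' ?_
    filter_upwards [eventually_le_atBot 0] with z hz
    exact (logTDensity_div_logLaplaceDensity_exp_of_nonpos α ψ ψ₂ h₁.ne' hz).symm
  · rw [← tendsto_comp_exp_atTop]
    refine ((tendsto_exp_mul_mul_one_add_sq_div_rpow_neg_atTop (one_div_pos.mpr h₂)
      (by positivity : 0 < α * ψ ^ 2) hp).const_mul_atTop
      (by positivity : 0 < 2 * ψ₂ * studentTConst α ψ)).congr' ?_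
    filter_upwards [eventually_gt_atTop 0] with z hz
    exact (logTDensity_div_logLaplaceDensity_exp_of_pos α ψ ψ₁ h₂.ne' hz).symm
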